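/- For every t ∈ (0,1) and every x ∈ ℝ^d, the trace of the Hessian of log ρ_t satisfies the lower bound tr(∇² log ρ_t(x)) ≥ −d/t. -/

import Mathlib

open MeasureTheory Real Filter
open scoped ENNReal

noncomputable section

/-- Density at `x` of the Gaussian distribution `N(√(1-t)·x₀, t·I_d)`, i.e. the transition
density of `X_t = √(1-t)·X₀ + √t·Z` given `X₀ = x₀`. -/
def heatKernel (d : ℕ) (t : ℝ) (x x₀ : EuclideanSpace ℝ (Fin d)) : ℝ :=
  (2 * π * t) ^ (-(d : ℝ) / 2) * Real.exp (-‖x - Real.sqrt (1 - t) • x₀‖ ^ 2 / (2 * t))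

/-- The density `ρ_t` of `X_t = √(1-t)·X₀ + √t·Z` where `X₀ ∼ μ` and `Z ∼ N(0, I_d)`
is independent of `X₀`. -/
def rho (d : ℕ) (μ : Measure (EuclideanSpace ℝ (Fin d))) (t : ℝ)
    (x : EuclideanSpace ℝ (Fin d)) : ℝ :=
  ∫ x₀, heatKernel d t x x₀ ∂μ

/-- Density of the standard Gaussian `N(0, I_d)` on `ℝ^d`. -/
def stdGaussianDensity (d : ℕ) (z : EuclideanSpace ℝ (Fin d)) : ℝ :=
  (2 * π) ^ (-(d : ℝ) / 2) * Real.exp (-‖z‖ ^ 2 / 2)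

/-- Conditional expectation `E[f(X_t) | X₀ = x₀] = E_{Z ∼ N(0,I_d)}[f(√(1-t)·x₀ + √t·Z)]`. -/
def condExpX0 (d : ℕ) (t : ℝ) (x₀ : EuclideanSpace ℝ (Fin d))
    (f : EuclideanSpace ℝ (Fin d) → ℝ) : ℝ :=
  ∫ z, f (Real.sqrt (1 - t) • x₀ + Real.sqrt t • z) * stdGaussianDensity d z

/-- Trace of the Hessian of `f : ℝ^d → ℝ` at `x`, i.e. `∑ᵢ ∂²f/∂xᵢ² (x)`. -/
def traceHessian (d : ℕ) (f : EuclideanSpace ℝ (Fin d) → ℝ)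
    (x : EuclideanSpace ℝ (Fin d)) : ℝ :=
  ∑ i : Fin d,
    fderiv ℝ (fun y => fderiv ℝ f y (EuclideanSpace.single i 1)) x (EuclideanSpace.single i 1)

/-! Up to the constant `(2πt)^(-d/2)`, `ρ_t` is the mixture `∫ exp (-‖y - m‖² / (2t)) dν(m)` of
Gaussian bumps over the law `ν` of `√(1-t) X₀`. Differentiating twice under the integral along a
direction `v`, and writing `E` for the average against the probability weight
`exp (-‖y - m‖² / (2t)) dν(m) / ρ_t(y)`,
`∂ᵥ² log ρ_t(y) = -‖v‖²/t + (E[⟪v, y - m⟫²] - E[⟪v, y - m⟫]²) / t²`.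
The variance term is nonnegative by Cauchy–Schwarz, so `∂ᵥ² log ρ_t ≥ -‖v‖²/t`; summing over the
coordinate directions gives `-d/t`. -/

open scoped RealInnerProductSpace

theorem sq_integral_mul_le_integral_sq_mul_mul_integral {α : Type*} [MeasurableSpace α]
    {μ : Measure α} {f w : α → ℝ} (hw : 0 ≤ᵐ[μ] w) (hw_int : Integrable w μ)
    (hfw : Integrable (fun a => f a * w a) μ) (hffw : Integrable (fun a => f a ^ 2 * w a) μ) :
    (∫ a, f a * w a ∂μ) ^ 2 ≤ (∫ a, f a ^ 2 * w a ∂μ) * ∫ a, w a ∂μ := by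
  have hquad : ∀ s : ℝ, 0 ≤ (∫ a, w a ∂μ) * (s * s) + (-2 * ∫ a, f a * w a ∂μ) * s
      + ∫ a, f a ^ 2 * w a ∂μ := fun s => by
    have hexp : ∫ a, (s - f a) ^ 2 * w a ∂μ = (∫ a, w a ∂μ) * (s * s)
        + (-2 * ∫ a, f a * w a ∂μ) * s + ∫ a, f a ^ 2 * w a ∂μ := by
      have hpoint : (fun a => (s - f a) ^ 2 * w a)
          = fun a => (s * s) * w a + (-2 * s) * (f a * w a) + f a ^ 2 * w a := by
        funext a; ring
      have hlin : Integrable (fun a => (s * s) * w a + (-2 * s) * (f a * w a)) μ :=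
        (hw_int.const_mul _).add (hfw.const_mul _)
      rw [hpoint, integral_add hlin hffw, integral_add (hw_int.const_mul _) (hfw.const_mul _),
        integral_const_mul, integral_const_mul]
      ring
    rw [← hexp]
    exact integral_nonneg_of_ae (hw.mono fun a ha => mul_nonneg (sq_nonneg _) ha)
  -- `s ↦ ∫ (s - f)² w` is a nonnegative quadratic polynomial, so its discriminant is `≤ 0`.
  have hdisc := discrim_le_zero hquad
  rw [discrim] at hdisc
  linarith

section Calculus

variable {E : Type*} [NormedAddCommGroup E] [NormedSpace ℝ E]

theorem fderiv_fderiv_log_apply {f : E → ℝ} {f' : E → E →L[ℝ] ℝ} {f'' : E →L[ℝ] ℝ} {v x : E}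
    (hf : ∀ y, HasFDerivAt f (f' y) y) (hf₀ : ∀ y, f y ≠ 0)
    (hf' : HasFDerivAt (fun y => f' y v) f'' x) :
    fderiv ℝ (fun y => fderiv ℝ (fun y => log (f y)) y v) x v
      = f'' v / f x - (f' x v / f x) ^ 2 := by
  have hlog : (fun y => fderiv ℝ (fun y => log (f y)) y v) = fun y => f' y v * (f y)⁻¹ := by
    funext y
    rw [((hf y).log (hf₀ y)).fderiv, smul_apply, smul_eq_mul, mul_comm]
  have hinv : HasFDerivAt (fun y => (f y)⁻¹) (-(f x ^ 2)⁻¹ • f' x) x :=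
    (hasDerivAt_inv (hf₀ x)).comp_hasFDerivAt x (hf x)
  have hquot : HasFDerivAt (fun y => f' y v * (f y)⁻¹) _ x := hf'.mul hinv
  rw [hlog, hquot.fderiv]
  simp only [add_apply, smul_apply, smul_eq_mul]
  field_simp
  ring

variable {α : Type*} [MeasurableSpace α] {μ : Measure α} [IsFiniteMeasure μ]
  {G : Type*} [NormedAddCommGroup G] [NormedSpace ℝ G]

theorem hasFDerivAt_integral_of_fderiv_le {F : E → α → G} {F' : E → α → E →L[ℝ] G} {C : ℝ}
    {x : E} (hF_meas : ∀ y, AEStronglyMeasurable (F y) μ) (hF_int : Integrable (F x) μ)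
    (hF'_meas : AEStronglyMeasurable (F' x) μ) (hF'_le : ∀ y a, ‖F' y a‖ ≤ C)
    (hF' : ∀ y a, HasFDerivAt (F · a) (F' y a) y) :
    HasFDerivAt (fun y => ∫ a, F y a ∂μ) (∫ a, F' x a ∂μ) x :=
  hasFDerivAt_integral_of_dominated_of_fderiv_le (bound := fun _ => C) univ_mem
    (Eventually.of_forall hF_meas) hF_int hF'_meas (ae_of_all _ fun a y _ => hF'_le y a)
    (integrable_const C) (ae_of_all _ fun a y _ => hF' y a)

end Calculus

section GaussBump

variable {E : Type*} [NormedAddCommGroup E] {t : ℝ}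

def gaussBump (t : ℝ) (z : E) : ℝ := exp (-‖z‖ ^ 2 / (2 * t))

@[fun_prop]
theorem continuous_gaussBump : Continuous (gaussBump (E := E) t) := by
  unfold gaussBump; fun_prop

theorem gaussBump_pos (z : E) : 0 < gaussBump t z := exp_pos _

theorem gaussBump_le_one (ht : 0 ≤ t) (z : E) : gaussBump t z ≤ 1 :=
  exp_le_one_iff.mpr (div_nonpos_of_nonpos_of_nonneg (neg_nonpos.mpr (sq_nonneg _)) (by positivity))

theorem sq_norm_mul_gaussBump_le (ht : 0 < t) (z : E) : ‖z‖ ^ 2 * gaussBump t z ≤ 2 * t := by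
  have h := mul_exp_neg_le_exp_neg_one (‖z‖ ^ 2 / (2 * t))
  have h1 : exp (-1) ≤ 1 := exp_le_one_iff.mpr (by norm_num)
  calc ‖z‖ ^ 2 * gaussBump t z = 2 * t * (‖z‖ ^ 2 / (2 * t) * exp (-(‖z‖ ^ 2 / (2 * t)))) := by
        rw [gaussBump, neg_div]; field_simp
    _ ≤ 2 * t := by nlinarith

theorem norm_mul_gaussBump_le (ht : 0 < t) (z : E) : ‖z‖ * gaussBump t z ≤ 1 + 2 * t := by
  have hz : ‖z‖ ≤ 1 + ‖z‖ ^ 2 := by nlinarith [sq_nonneg (‖z‖ - 1)]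
  nlinarith [gaussBump_le_one ht.le z, sq_norm_mul_gaussBump_le ht z, gaussBump_pos (t := t) z]

variable [InnerProductSpace ℝ E]

theorem hasFDerivAt_gaussBump (z : E) :
    HasFDerivAt (gaussBump t) (-(gaussBump t z / t) • innerSL ℝ z) z := by
  have hfun : gaussBump t = fun z : E => exp (‖z‖ ^ 2 * -(2 * t)⁻¹) := by
    funext z; rw [gaussBump]; ring_nf
  have h := HasFDerivAt.exp (HasFDerivAt.mul_const (hasStrictFDerivAt_norm_sq z).hasFDerivAt
    (-(2 * t)⁻¹))
  rw [hfun]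
  refine h.congr_fderiv ?_
  ext w
  simp only [smul_apply, innerSL_apply_apply, smul_eq_mul]
  ring

theorem hasFDerivAt_inner_mul_gaussBump (v z : E) :
    HasFDerivAt (fun z => ⟪v, z⟫ * gaussBump t z)
      (gaussBump t z • innerSL ℝ v - (⟪v, z⟫ * gaussBump t z / t) • innerSL ℝ z) z := by
  have h : HasFDerivAt (fun z => ⟪v, z⟫ * gaussBump t z) _ z :=
    (innerSL ℝ v).hasFDerivAt.mul (hasFDerivAt_gaussBump z)
  refine h.congr_fderiv ?_
  ext w
  simp only [add_apply, sub_apply, smul_apply, innerSL_apply_apply, smul_eq_mul]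
  ring

theorem norm_fderiv_gaussBump_le (ht : 0 < t) (z : E) :
    ‖-(gaussBump t z / t) • innerSL ℝ z‖ ≤ (1 + 2 * t) / t := by
  rw [norm_smul, innerSL_apply_norm, norm_neg, norm_div, norm_of_nonneg (gaussBump_pos z).le,
    norm_of_nonneg ht.le, div_mul_eq_mul_div, mul_comm]
  exact div_le_div_of_nonneg_right (norm_mul_gaussBump_le ht z) ht.le

theorem norm_fderiv_inner_mul_gaussBump_le (ht : 0 < t) (v z : E) :
    ‖gaussBump t z • innerSL ℝ v - (⟪v, z⟫ * gaussBump t z / t) • innerSL ℝ z‖ ≤ 3 * ‖v‖ := by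
  have hg := gaussBump_pos (t := t) z
  have h₁ : ‖gaussBump t z • innerSL ℝ v‖ ≤ ‖v‖ := by
    rw [norm_smul, innerSL_apply_norm, norm_of_nonneg hg.le]
    exact mul_le_of_le_one_left (norm_nonneg v) (gaussBump_le_one ht.le z)
  have h₂ : ‖(⟪v, z⟫ * gaussBump t z / t) • innerSL ℝ z‖ ≤ 2 * ‖v‖ := by
    rw [norm_smul, innerSL_apply_norm, norm_div, norm_mul, norm_of_nonneg hg.le,
      norm_of_nonneg ht.le, div_mul_eq_mul_div, div_le_iff₀ ht]
    calc ‖⟪v, z⟫‖ * gaussBump t z * ‖z‖ ≤ ‖v‖ * (‖z‖ ^ 2 * gaussBump t z) := by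
          have h := mul_le_mul_of_nonneg_right (norm_inner_le_norm (𝕜 := ℝ) v z)
            (mul_nonneg hg.le (norm_nonneg z))
          linarith
      _ ≤ ‖v‖ * (2 * t) := mul_le_mul_of_nonneg_left (sq_norm_mul_gaussBump_le ht z) (norm_nonneg v)
      _ = 2 * ‖v‖ * t := by ring
  calc _ ≤ _ := norm_sub_le _ _
    _ ≤ ‖v‖ + 2 * ‖v‖ := add_le_add h₁ h₂
    _ = 3 * ‖v‖ := by ring

theorem hasFDerivAt_gaussBump_sub (m y : E) :
    HasFDerivAt (fun y => gaussBump t (y - m))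
      (-(gaussBump t (y - m) / t) • innerSL ℝ (y - m)) y := by
  simpa only [ContinuousLinearMap.comp_id, Function.comp_def, id_eq] using
    (hasFDerivAt_gaussBump (y - m)).comp y ((hasFDerivAt_id y).sub_const m)

theorem hasFDerivAt_inner_mul_gaussBump_sub (v m y : E) :
    HasFDerivAt (fun y => ⟪v, y - m⟫ * gaussBump t (y - m))
      (gaussBump t (y - m) • innerSL ℝ v
        - (⟪v, y - m⟫ * gaussBump t (y - m) / t) • innerSL ℝ (y - m)) y := by
  simpa only [ContinuousLinearMap.comp_id, Function.comp_def, id_eq] using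
    (hasFDerivAt_inner_mul_gaussBump v (y - m)).comp y ((hasFDerivAt_id y).sub_const m)

end GaussBump

section GaussianMixture

variable {E : Type*} [NormedAddCommGroup E] [MeasurableSpace E] [OpensMeasurableSpace E] {t : ℝ}

def gaussianMixture (ν : Measure E) (t : ℝ) (y : E) : ℝ := ∫ m, gaussBump t (y - m) ∂ν

variable {ν : Measure E} [IsFiniteMeasure ν]

theorem integrable_gaussBump_sub (ht : 0 ≤ t) (y : E) :
    Integrable (fun m => gaussBump t (y - m)) ν :=
  .of_bound (by fun_prop : Continuous _).aestronglyMeasurable 1 (ae_of_all _ fun m => by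
    rw [norm_of_nonneg (gaussBump_pos _).le]; exact gaussBump_le_one ht _)

theorem gaussianMixture_pos (hν : ν ≠ 0) (ht : 0 ≤ t) (y : E) : 0 < gaussianMixture ν t y := by
  refine (integral_pos_iff_support_of_nonneg (fun m => (gaussBump_pos _).le)
    (integrable_gaussBump_sub ht y)).mpr ?_
  rw [Function.support_eq_univ fun m => (gaussBump_pos _).ne']
  exact Measure.measure_univ_pos.mpr hν

variable [InnerProductSpace ℝ E]

theorem integrable_inner_mul_gaussBump_sub (ht : 0 < t) (v y : E) :
    Integrable (fun m => ⟪v, y - m⟫ * gaussBump t (y - m)) ν :=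
  .of_bound (by fun_prop : Continuous _).aestronglyMeasurable (‖v‖ * (1 + 2 * t))
    (ae_of_all _ fun m => by
      rw [norm_mul, norm_of_nonneg (gaussBump_pos _).le]
      calc ‖⟪v, y - m⟫‖ * gaussBump t (y - m) ≤ ‖v‖ * ‖y - m‖ * gaussBump t (y - m) :=
            mul_le_mul_of_nonneg_right (norm_inner_le_norm v _) (gaussBump_pos _).le
        _ ≤ ‖v‖ * (1 + 2 * t) := by
            rw [mul_assoc]
            exact mul_le_mul_of_nonneg_left (norm_mul_gaussBump_le ht _) (norm_nonneg v))

theorem integrable_inner_sq_mul_gaussBump_sub (ht : 0 < t) (v y : E) :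
    Integrable (fun m => ⟪v, y - m⟫ ^ 2 * gaussBump t (y - m)) ν :=
  .of_bound (by fun_prop : Continuous _).aestronglyMeasurable (‖v‖ ^ 2 * (2 * t))
    (ae_of_all _ fun m => by
      rw [norm_mul, norm_pow, norm_of_nonneg (gaussBump_pos _).le]
      calc ‖⟪v, y - m⟫‖ ^ 2 * gaussBump t (y - m) ≤ (‖v‖ * ‖y - m‖) ^ 2 * gaussBump t (y - m) :=
            by gcongr; exacts [(gaussBump_pos _).le, norm_inner_le_norm v _]
        _ ≤ ‖v‖ ^ 2 * (2 * t) := by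
            rw [mul_pow, mul_assoc]
            exact mul_le_mul_of_nonneg_left (sq_norm_mul_gaussBump_le ht _) (sq_nonneg _))

variable [SecondCountableTopology E]

theorem hasFDerivAt_gaussianMixture (ht : 0 < t) (y : E) :
    HasFDerivAt (gaussianMixture ν t)
      (∫ m, -(gaussBump t (y - m) / t) • innerSL ℝ (y - m) ∂ν) y :=
  hasFDerivAt_integral_of_fderiv_le (fun _ => (by fun_prop : Continuous _).aestronglyMeasurable)
    (integrable_gaussBump_sub ht.le y)
    (by fun_prop) (fun _ _ => norm_fderiv_gaussBump_le ht _)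
    (fun y m => hasFDerivAt_gaussBump_sub m y)

theorem hasFDerivAt_integral_inner_mul_gaussBump_sub (ht : 0 < t) (v y : E) :
    HasFDerivAt (fun y => ∫ m, ⟪v, y - m⟫ * gaussBump t (y - m) ∂ν)
      (∫ m, gaussBump t (y - m) • innerSL ℝ v
        - (⟪v, y - m⟫ * gaussBump t (y - m) / t) • innerSL ℝ (y - m) ∂ν) y :=
  hasFDerivAt_integral_of_fderiv_le (fun _ => (by fun_prop : Continuous _).aestronglyMeasurable)
    (integrable_inner_mul_gaussBump_sub ht v y) (by fun_prop)
    (fun _ _ => norm_fderiv_inner_mul_gaussBump_le ht v _)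
    (fun y m => hasFDerivAt_inner_mul_gaussBump_sub v m y)

theorem integral_fderiv_gaussBump_sub_apply (ht : 0 < t) (v y : E) :
    (∫ m, -(gaussBump t (y - m) / t) • innerSL ℝ (y - m) ∂ν) v
      = -t⁻¹ * ∫ m, ⟪v, y - m⟫ * gaussBump t (y - m) ∂ν := by
  rw [ContinuousLinearMap.integral_apply (.of_bound (by fun_prop) _
    (ae_of_all _ fun _ => norm_fderiv_gaussBump_le ht _)), ← integral_const_mul]
  congr 1 with m
  rw [smul_apply, innerSL_apply_apply, smul_eq_mul, real_inner_comm]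
  ring

theorem integral_fderiv_inner_mul_gaussBump_sub_apply (ht : 0 < t) (v y : E) :
    (∫ m, gaussBump t (y - m) • innerSL ℝ v
        - (⟪v, y - m⟫ * gaussBump t (y - m) / t) • innerSL ℝ (y - m) ∂ν) v
      = ‖v‖ ^ 2 * gaussianMixture ν t y - t⁻¹ * ∫ m, ⟪v, y - m⟫ ^ 2 * gaussBump t (y - m) ∂ν := by
  rw [ContinuousLinearMap.integral_apply (.of_bound (by fun_prop) _
    (ae_of_all _ fun _ => norm_fderiv_inner_mul_gaussBump_le ht v _)), gaussianMixture,
    ← integral_const_mul, ← integral_const_mul, ← integral_sub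
    ((integrable_gaussBump_sub ht.le y).const_mul _)
    ((integrable_inner_sq_mul_gaussBump_sub ht v y).const_mul _)]
  congr 1 with m
  simp only [sub_apply, smul_apply, innerSL_apply_apply, smul_eq_mul, real_inner_self_eq_norm_sq,
    real_inner_comm v (y - m)]
  field_simp

theorem neg_sq_norm_div_le_fderiv_fderiv_log_gaussianMixture (hν : ν ≠ 0) (ht : 0 < t)
    (v x : E) :
    -(‖v‖ ^ 2 / t)
      ≤ fderiv ℝ (fun y => fderiv ℝ (fun y => log (gaussianMixture ν t y)) y v) x v := by
  have hmoment : HasFDerivAt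
      (fun y => (∫ m, -(gaussBump t (y - m) / t) • innerSL ℝ (y - m) ∂ν) v)
      (-t⁻¹ • ∫ m, gaussBump t (x - m) • innerSL ℝ v
        - (⟪v, x - m⟫ * gaussBump t (x - m) / t) • innerSL ℝ (x - m) ∂ν) x := by
    simp_rw [integral_fderiv_gaussBump_sub_apply ht v]
    exact (hasFDerivAt_integral_inner_mul_gaussBump_sub ht v x).const_mul _
  rw [fderiv_fderiv_log_apply (hasFDerivAt_gaussianMixture ht)
    (fun y => (gaussianMixture_pos hν ht.le y).ne') hmoment, smul_apply, smul_eq_mul,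
    integral_fderiv_gaussBump_sub_apply ht v, integral_fderiv_inner_mul_gaussBump_sub_apply ht v]
  set ρ := gaussianMixture ν t x
  set M := ∫ m, ⟪v, x - m⟫ * gaussBump t (x - m) ∂ν
  set S := ∫ m, ⟪v, x - m⟫ ^ 2 * gaussBump t (x - m) ∂ν
  have hρ : 0 < ρ := gaussianMixture_pos hν ht.le x
  have hcs : M ^ 2 ≤ S * ρ := sq_integral_mul_le_integral_sq_mul_mul_integral
    (ae_of_all _ fun _ => (gaussBump_pos _).le) (integrable_gaussBump_sub ht.le x)
    (integrable_inner_mul_gaussBump_sub ht v x) (integrable_inner_sq_mul_gaussBump_sub ht v x)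
  have hsplit : -t⁻¹ * (‖v‖ ^ 2 * ρ - t⁻¹ * S) / ρ - (-t⁻¹ * M / ρ) ^ 2
      = -(‖v‖ ^ 2 / t) + (S * ρ - M ^ 2) / (t * ρ) ^ 2 := by
    field_simp
    ring
  rw [hsplit]
  have hvar : 0 ≤ (S * ρ - M ^ 2) / (t * ρ) ^ 2 := div_nonneg (sub_nonneg.mpr hcs) (sq_nonneg _)
  linarith

end GaussianMixture

theorem rho_eq_gaussianMixture (d : ℕ) (μ : Measure (EuclideanSpace ℝ (Fin d))) {t : ℝ}
    (ht : 0 ≤ t) :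
    rho d μ t = gaussianMixture
      ((((2 * π * t) ^ (-(d : ℝ) / 2)).toNNReal) • μ.map (fun x₀ => Real.sqrt (1 - t) • x₀)) t := by
  funext y
  rw [gaussianMixture, integral_smul_nnreal_measure, integral_map (by fun_prop)
    (by fun_prop : Continuous _).aestronglyMeasurable, NNReal.smul_def, smul_eq_mul,
    Real.coe_toNNReal _ (by positivity), ← integral_const_mul]
  rfl

theorem trace_hessian_log_density_lower_bound_general
    (d : ℕ) (μ : Measure (EuclideanSpace ℝ (Fin d))) [IsProbabilityMeasure μ]
    (t : ℝ) (ht₀ : 0 < t) (x : EuclideanSpace ℝ (Fin d)) :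
    traceHessian d (fun y => Real.log (rho d μ t y)) x ≥ -(d / t) := by
  have hν : (((2 * π * t) ^ (-(d : ℝ) / 2)).toNNReal)
      • μ.map (fun x₀ : EuclideanSpace ℝ (Fin d) => Real.sqrt (1 - t) • x₀) ≠ 0 :=
    smul_ne_zero (Real.toNNReal_pos.mpr (by positivity)).ne'
      ((Measure.map_ne_zero_iff (by fun_prop)).mpr (IsProbabilityMeasure.ne_zero μ))
  rw [rho_eq_gaussianMixture d μ ht₀.le, ge_iff_le, traceHessian]
  calc -((d : ℝ) / t) = ∑ i : Fin d, -(‖EuclideanSpace.single i (1 : ℝ)‖ ^ 2 / t) := by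
        simp [div_eq_mul_inv]
    _ ≤ _ := Finset.sum_le_sum fun i _ =>
        neg_sq_norm_div_le_fderiv_fderiv_log_gaussianMixture hν ht₀ _ x

/-- **Claim 2 (lower bound).** For every `t ∈ (0,1)` and `x ∈ ℝ^d`,
`tr(∇² log ρ_t(x)) ≥ −d/t`. -/
theorem trace_hessian_log_density_lower_bound
    (d : ℕ) (hd : 1 ≤ d) (μ : Measure (EuclideanSpace ℝ (Fin d))) [IsProbabilityMeasure μ]
    (t : ℝ) (ht₀ : 0 < t) (ht₁ : t < 1) (x : EuclideanSpace ℝ (Fin d)) :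
    traceHessian d (fun y => Real.log (rho d μ t y)) x ≥ -(d / t) :=
  trace_hessian_log_density_lower_bound_general d μ t ht₀ x
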